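/- For each ε > 0 there exists a function Φ : ℝ² → ℂ which is C^∞ on ℝ² ∖ Γ_ε and satisfies: (i) Φ(x₁,−x₂) = conj(Φ(x₁,x₂)) for all (x₁,x₂) ∈ ℝ² ∖ Γ_ε; (ii) |Φ(x)| = 1 for all x ∈ ℝ² ∖ Γ_ε; (iii) i·∇Φ(x) + A_ε(x)·Φ(x) = 0 (as an identity of ℂ²-valued functions) for all x ∈ ℝ² ∖ Γ_ε; (iv) Φ(x₁,0) = 1 for all x₁ with |x₁| > ε, and for every t ∈ (−ε,ε) one has lim_{δ→0⁺} Φ(t,δ) = i and lim_{δ→0⁺} Φ(t,−δ) = −i. -/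

import Mathlib

/-- The Aharonov–Bohm potential of circulation `1/2` with pole `a`:
`A_a(x) = (1/2)·(−(x₂−a₂), x₁−a₁)/|x−a|²`, for `x ≠ a`. -/
noncomputable def ABpot (a : ℝ × ℝ) (x : ℝ × ℝ) : ℝ × ℝ :=
  ((1 / 2) * (-(x.2 - a.2)) / ((x.1 - a.1) ^ 2 + (x.2 - a.2) ^ 2),
   (1 / 2) * (x.1 - a.1) / ((x.1 - a.1) ^ 2 + (x.2 - a.2) ^ 2))

/-- The two-pole Aharonov–Bohm potential `A_ε = A_{(ε,0)} − A_{(−ε,0)}`. -/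
noncomputable def ABpotTwo (ε : ℝ) (x : ℝ × ℝ) : ℝ × ℝ :=
  ABpot (ε, 0) x - ABpot (-ε, 0) x

/-- The segment `Γ_ε = [−ε,ε] × {0} ⊂ ℝ²`. -/
def GammaSeg (ε : ℝ) : Set (ℝ × ℝ) := {x | -ε ≤ x.1 ∧ x.1 ≤ ε ∧ x.2 = 0}

open Complex Filter Set

/-- The identification `ℝ² ≃ ℂ`. -/
noncomputable def zc (x : ℝ × ℝ) : ℂ := (x.1 : ℂ) + (x.2 : ℂ) * Complex.I

/-- `zc` as a continuous linear map. -/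
noncomputable def Jc : ℝ × ℝ →L[ℝ] ℂ :=
  Complex.ofRealCLM.comp (ContinuousLinearMap.fst ℝ ℝ ℝ) +
    (ContinuousLinearMap.snd ℝ ℝ ℝ).smulRight Complex.I

@[simp] lemma zc_re (x : ℝ × ℝ) : (zc x).re = x.1 := by simp [zc]
@[simp] lemma zc_im (x : ℝ × ℝ) : (zc x).im = x.2 := by simp [zc]

lemma zc_eq_Jc : zc = ⇑Jc := by
  funext x
  simp [zc, Jc, Complex.real_smul]

lemma hasFDerivAt_zc (x : ℝ × ℝ) : HasFDerivAt zc Jc x := by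
  rw [zc_eq_Jc]; exact Jc.hasFDerivAt

@[simp] lemma Jc_apply (v : ℝ × ℝ) : Jc v = (v.1 : ℂ) + (v.2 : ℂ) * Complex.I := by
  rw [← zc_eq_Jc]; rfl

/-- The conformal map `w = (z-ε)/(z+ε)` as a function of `x ∈ ℝ²`. -/
noncomputable def wfun (ε : ℝ) (y : ℝ × ℝ) : ℂ := (zc y - (ε : ℂ)) / (zc y + (ε : ℂ))

/-- The gauge function `Φ = exp((i/2)·arg w)`. -/
noncomputable def Phi (ε : ℝ) (y : ℝ × ℝ) : ℂ :=
  Complex.exp ((Complex.I / 2) * (((Complex.log (wfun ε y)).im : ℝ) : ℂ))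

lemma Phi_eq_arg (ε : ℝ) (y : ℝ × ℝ) :
    Phi ε y = Complex.exp ((Complex.I / 2) * (((wfun ε y).arg : ℝ) : ℂ)) := by
  rw [Phi, Complex.log_im]

lemma wfun_im (ε : ℝ) (y : ℝ × ℝ) :
    (wfun ε y).im = 2 * ε * y.2 / Complex.normSq (zc y + (ε : ℂ)) := by
  rw [wfun, Complex.div_im]
  simp only [Complex.sub_im, Complex.add_im, Complex.sub_re, Complex.add_re,
    Complex.ofReal_im, Complex.ofReal_re, zc_re, zc_im]
  ring

lemma wfun_re (ε : ℝ) (y : ℝ × ℝ) :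
    (wfun ε y).re = (y.1 ^ 2 + y.2 ^ 2 - ε ^ 2) / Complex.normSq (zc y + (ε : ℂ)) := by
  rw [wfun, Complex.div_re]
  simp only [Complex.sub_im, Complex.add_im, Complex.sub_re, Complex.add_re,
    Complex.ofReal_im, Complex.ofReal_re, zc_re, zc_im]
  ring

section pointfacts

variable {ε : ℝ} {x : ℝ × ℝ}

lemma zc_sub_ne (hε : 0 < ε) (hx : x ∉ GammaSeg ε) : zc x - (ε : ℂ) ≠ 0 := by
  intro h
  rw [sub_eq_zero] at h
  have h1 : x.1 = ε := by have := congrArg Complex.re h; simpa using this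
  have h2 : x.2 = 0 := by have := congrArg Complex.im h; simpa using this
  exact hx ⟨by linarith, by linarith, h2⟩

lemma zc_add_ne (hε : 0 < ε) (hx : x ∉ GammaSeg ε) : zc x + (ε : ℂ) ≠ 0 := by
  intro h
  have h1 : x.1 + ε = 0 := by have := congrArg Complex.re h; simpa using this
  have h2 : x.2 = 0 := by have := congrArg Complex.im h; simpa using this
  exact hx ⟨by linarith, by linarith, h2⟩

lemma wfun_slit (hε : 0 < ε) (hx : x ∉ GammaSeg ε) : wfun ε x ∈ Complex.slitPlane := by
  have h2 : zc x + (ε : ℂ) ≠ 0 := zc_add_ne hε hx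
  have hN : 0 < Complex.normSq (zc x + (ε : ℂ)) := Complex.normSq_pos.2 h2
  rw [Complex.mem_slitPlane_iff]
  by_cases h0 : x.2 = 0
  · left
    rw [wfun_re]
    apply div_pos ?_ hN
    have hne : ¬(-ε ≤ x.1 ∧ x.1 ≤ ε) := fun hc => hx ⟨hc.1, hc.2, h0⟩
    rw [not_and_or] at hne
    rcases hne with h | h <;> push_neg at h <;> nlinarith
  · right
    rw [wfun_im]
    intro hc
    apply h0
    have := (div_eq_zero_iff.mp hc).resolve_right (ne_of_gt hN)
    nlinarith
end pointfacts

lemma hasFDerivAt_Phi {ε : ℝ} {x : ℝ × ℝ} (hε : 0 < ε) (hx : x ∉ GammaSeg ε) :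
    HasFDerivAt (Phi ε)
      ((((1 : ℂ →L[ℂ] ℂ).smulRight (Phi ε x)).restrictScalars ℝ).comp
        ((Complex.I / 2) • (Complex.ofRealCLM.comp (Complex.imCLM.comp
          ((((1 : ℂ →L[ℂ] ℂ).smulRight ((zc x - (ε : ℂ))⁻¹ - (zc x + (ε : ℂ))⁻¹)).restrictScalars
              ℝ).comp Jc))))) x := by
  have h1 : zc x - (ε : ℂ) ≠ 0 := zc_sub_ne hε hx
  have h2 : zc x + (ε : ℂ) ≠ 0 := zc_add_ne hε hx
  have hslit : (zc x - (ε : ℂ)) / (zc x + (ε : ℂ)) ∈ Complex.slitPlane := wfun_slit hε hx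
  have hq : HasDerivAt (fun w : ℂ => (w - (ε : ℂ)) / (w + (ε : ℂ)))
      ((1 * (zc x + (ε : ℂ)) - (zc x - (ε : ℂ)) * 1) / (zc x + (ε : ℂ)) ^ 2) (zc x) :=
    ((hasDerivAt_id _).sub_const _).div ((hasDerivAt_id _).add_const _) h2
  have hlog := (Complex.hasDerivAt_log hslit).comp (zc x) hq
  have hder : ((zc x - (ε : ℂ)) / (zc x + (ε : ℂ)))⁻¹ *
      ((1 * (zc x + (ε : ℂ)) - (zc x - (ε : ℂ)) * 1) / (zc x + (ε : ℂ)) ^ 2)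
      = (zc x - (ε : ℂ))⁻¹ - (zc x + (ε : ℂ))⁻¹ := by
    field_simp
  rw [hder] at hlog
  have hL := (hlog.hasFDerivAt.restrictScalars ℝ).comp x (hasFDerivAt_zc x)
  have hIm := Complex.imCLM.hasFDerivAt.comp x hL
  have hRe := Complex.ofRealCLM.hasFDerivAt.comp x hIm
  have hmul := hRe.const_mul (Complex.I / 2)
  have hexp := ((Complex.hasDerivAt_exp
      ((Complex.I / 2) * (((Complex.log (wfun ε x)).im : ℝ) : ℂ))).hasFDerivAt.restrictScalars
      ℝ).comp x hmul
  exact hexp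

lemma fderiv_Phi {ε : ℝ} {x : ℝ × ℝ} (hε : 0 < ε) (hx : x ∉ GammaSeg ε) (v : ℝ × ℝ) :
    fderiv ℝ (Phi ε) x v =
      (Complex.I / 2) * (((Jc v * ((zc x - (ε : ℂ))⁻¹ - (zc x + (ε : ℂ))⁻¹)).im : ℝ) : ℂ)
        * Phi ε x := by
  rw [(hasFDerivAt_Phi hε hx).fderiv]
  simp only [ContinuousLinearMap.coe_comp', Function.comp_apply,
    ContinuousLinearMap.coe_restrictScalars', ContinuousLinearMap.coe_smul',
    Pi.smul_apply, ContinuousLinearMap.smulRight_apply, ContinuousLinearMap.one_apply,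
    Complex.ofRealCLM_apply, Complex.imCLM_apply, smul_eq_mul]

/-- For each `ε > 0` there is a gauge function `Φ`, smooth on `ℝ² ∖ Γ_ε`, with
(i) `Φ∘σ = conj Φ`, (ii) `|Φ| = 1`, (iii) `(i∇ + A_ε)Φ = 0`, and
(iv) `Φ = 1` on `(ℝ×{0}) ∖ Γ_ε` while `Φ(t, ±δ) → ±i` as `δ → 0⁺` for `t ∈ (−ε,ε)`. -/
theorem exists_gauge (ε : ℝ) (hε : 0 < ε) :
    ∃ Φ : ℝ × ℝ → ℂ,
      ContDiffOn ℝ (⊤ : ℕ∞) Φ (GammaSeg ε)ᶜ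
      ∧ (∀ x : ℝ × ℝ, x ∉ GammaSeg ε → Φ (x.1, -x.2) = starRingEnd ℂ (Φ x))
      ∧ (∀ x : ℝ × ℝ, x ∉ GammaSeg ε → ‖Φ x‖ = 1)
      ∧ (∀ x : ℝ × ℝ, x ∉ GammaSeg ε →
          Complex.I * fderiv ℝ Φ x (1, 0) + ((ABpotTwo ε x).1 : ℂ) * Φ x = 0
          ∧ Complex.I * fderiv ℝ Φ x (0, 1) + ((ABpotTwo ε x).2 : ℂ) * Φ x = 0)
      ∧ (∀ x₁ : ℝ, ε < |x₁| → Φ (x₁, 0) = 1)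
      ∧ (∀ t : ℝ, -ε < t → t < ε →
          Filter.Tendsto (fun δ : ℝ => Φ (t, δ)) (nhdsWithin 0 (Set.Ioi 0))
              (nhds Complex.I)
          ∧ Filter.Tendsto (fun δ : ℝ => Φ (t, -δ)) (nhdsWithin 0 (Set.Ioi 0))
              (nhds (-Complex.I))) := by
  refine ⟨Phi ε, ?_, ?_, ?_, ?_, ?_, ?_⟩
  · -- smoothness
    intro x hx
    apply ContDiffAt.contDiffWithinAt
    have hx' : x ∉ GammaSeg ε := hx
    have h2 : zc x + (ε : ℂ) ≠ 0 := zc_add_ne hε hx'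
    have hslit : (zc x - (ε : ℂ)) / (zc x + (ε : ℂ)) ∈ Complex.slitPlane := wfun_slit hε hx'
    have hzc : ContDiff ℝ (⊤ : ℕ∞) zc := by rw [zc_eq_Jc]; exact Jc.contDiff
    have hwC : ContDiffAt ℂ ⊤ (fun w : ℂ => Complex.log ((w - (ε : ℂ)) / (w + (ε : ℂ))))
        (zc x) :=
      (Complex.contDiffAt_log hslit).comp (zc x)
        ((contDiffAt_id.sub contDiffAt_const).div (contDiffAt_id.add contDiffAt_const) h2)
    have hwR : ContDiffAt ℝ (⊤ : ℕ∞) (fun w : ℂ => Complex.log ((w - (ε : ℂ)) / (w + (ε : ℂ))))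
        (zc x) := (hwC.restrict_scalars ℝ).of_le le_top
    have hlog : ContDiffAt ℝ (⊤ : ℕ∞) (fun y => Complex.log (wfun ε y)) x :=
      hwR.comp x hzc.contDiffAt
    have hin : ContDiffAt ℝ (⊤ : ℕ∞)
        (fun y => (Complex.I / 2) * (((Complex.log (wfun ε y)).im : ℝ) : ℂ)) x := by
      exact contDiffAt_const.mul
        ((Complex.ofRealCLM.contDiff.contDiffAt).comp x
          ((Complex.imCLM.contDiff.contDiffAt).comp x hlog))
    exact ((Complex.contDiff_exp (𝕜 := ℝ)).contDiffAt).comp x hin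
  · -- conjugation symmetry
    intro x hx
    have hslit := wfun_slit hε hx
    rw [Phi_eq_arg, Phi_eq_arg]
    have hzc : zc (x.1, -x.2) = (starRingEnd ℂ) (zc x) := by
      apply Complex.ext <;> simp
    have hw : wfun ε (x.1, -x.2) = (starRingEnd ℂ) (wfun ε x) := by
      rw [wfun, wfun, hzc, map_div₀, map_sub, map_add, Complex.conj_ofReal]
    have harg : (wfun ε (x.1, -x.2)).arg = -(wfun ε x).arg := by
      rw [hw, Complex.arg_conj, if_neg (Complex.slitPlane_arg_ne_pi hslit)]
    rw [harg, ← Complex.exp_conj]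
    congr 1
    rw [map_mul, map_div₀, Complex.conj_I, Complex.conj_ofReal, map_ofNat]
    push_cast
    ring
  · -- modulus one
    intro x _
    rw [Phi]
    have h : (Complex.I / 2) * (((Complex.log (wfun ε x)).im : ℝ) : ℂ)
        = (((Complex.log (wfun ε x)).im / 2 : ℝ) : ℂ) * Complex.I := by
      push_cast; ring
    rw [h]
    exact Complex.norm_exp_ofReal_mul_I _
  · -- the PDE
    intro x hx
    set c : ℂ := (zc x - (ε : ℂ))⁻¹ - (zc x + (ε : ℂ))⁻¹ with hc
    have hA1 : (ABpotTwo ε x).1 = c.im / 2 := by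
      rw [hc]
      simp only [ABpotTwo, ABpot, Prod.fst_sub, Complex.sub_im, Complex.inv_im,
        Complex.normSq_apply, Complex.sub_re, Complex.add_re, Complex.add_im,
        Complex.ofReal_re, Complex.ofReal_im, zc_re, zc_im]
      ring
    have hA2 : (ABpotTwo ε x).2 = c.re / 2 := by
      rw [hc]
      simp only [ABpotTwo, ABpot, Prod.snd_sub, Complex.sub_re, Complex.inv_re,
        Complex.normSq_apply, Complex.sub_im, Complex.add_re, Complex.add_im,
        Complex.ofReal_re, Complex.ofReal_im, zc_re, zc_im]
      ring
    constructor
    · rw [fderiv_Phi hε hx (1, 0), hA1]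
      rw [show Jc (1, 0) = 1 by simp, one_mul]
      push_cast
      linear_combination ((c.im : ℂ) * Phi ε x / 2) * Complex.I_mul_I
    · rw [fderiv_Phi hε hx (0, 1), hA2]
      rw [show Jc (0, 1) = Complex.I by simp,
        show (Complex.I * c).im = c.re by simp]
      push_cast
      linear_combination ((c.re : ℂ) * Phi ε x / 2) * Complex.I_mul_I
  · -- value 1 on the real axis outside the segment
    intro x₁ h
    have hzt : zc (x₁, (0 : ℝ)) = (x₁ : ℂ) := by apply Complex.ext <;> simp
    have hval : wfun ε (x₁, (0 : ℝ)) = (((x₁ - ε) / (x₁ + ε) : ℝ) : ℂ) := by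
      rw [wfun, hzt]; push_cast; ring
    have hnn : 0 ≤ (x₁ - ε) / (x₁ + ε) := by
      rcases lt_abs.mp h with h' | h'
      · exact le_of_lt (div_pos_iff.mpr (Or.inl ⟨by linarith, by linarith⟩))
      · exact le_of_lt (div_pos_iff.mpr (Or.inr ⟨by linarith, by linarith⟩))
    rw [Phi_eq_arg, hval, Complex.arg_ofReal_of_nonneg hnn]
    simp
  · -- boundary limits
    intro t ht1 ht2
    have htpos : 0 < t + ε := by linarith
    have htneg : t - ε < 0 := by linarith
    set w0 : ℂ := (((t - ε) / (t + ε) : ℝ) : ℂ) with hw0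
    have hw0re : w0.re < 0 := by
      rw [hw0, Complex.ofReal_re]; exact div_neg_of_neg_of_pos htneg htpos
    have hw0im : w0.im = 0 := by rw [hw0, Complex.ofReal_im]
    have hne : ∀ δ : ℝ, zc (t, δ) + (ε : ℂ) ≠ 0 := by
      intro δ h
      have := congrArg Complex.re h
      simp only [Complex.add_re, zc_re, Complex.ofReal_re, Complex.zero_re] at this
      linarith
    have hzt : zc (t, (0 : ℝ)) = (t : ℂ) := by apply Complex.ext <;> simp
    have hval0 : wfun ε (t, (0 : ℝ)) = w0 := by
      rw [wfun, hzt, hw0]; push_cast; ring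
    have hWc : Continuous fun s : ℝ => zc (t, s) := by
      have : (fun s : ℝ => zc (t, s)) = fun s : ℝ => (t : ℂ) + (s : ℂ) * Complex.I := rfl
      rw [this]; fun_prop
    have hCA : ContinuousAt (fun s : ℝ => wfun ε (t, s)) 0 := by
      apply ContinuousAt.div ((hWc.continuousAt).sub continuousAt_const)
        ((hWc.continuousAt).add continuousAt_const)
      exact hne 0
    have hcont : Continuous fun r : ℝ => Complex.exp ((Complex.I / 2) * (r : ℂ)) := by
      fun_prop
    constructor
    · -- upper limit
      have h1 : Filter.Tendsto (fun δ : ℝ => wfun ε (t, δ)) (nhdsWithin 0 (Set.Ioi 0))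
          (nhdsWithin w0 {z : ℂ | 0 ≤ z.im}) := by
        rw [tendsto_nhdsWithin_iff]
        constructor
        · have htd : Filter.Tendsto (fun δ : ℝ => wfun ε (t, δ)) (nhdsWithin 0 (Set.Ioi 0))
              (nhds (wfun ε (t, (0:ℝ)))) := hCA.tendsto.mono_left nhdsWithin_le_nhds
          rwa [hval0] at htd
        · filter_upwards [self_mem_nhdsWithin] with δ hδ
          show 0 ≤ (wfun ε (t, δ)).im
          rw [wfun_im]
          apply div_nonneg _ (Complex.normSq_nonneg _)
          have : (0:ℝ) < δ := hδ
          nlinarith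
      have harg := (Complex.tendsto_arg_nhdsWithin_im_nonneg_of_re_neg_of_im_zero
        hw0re hw0im).comp h1
      have h2 := (hcont.tendsto Real.pi).comp harg
      have hval : Complex.exp ((Complex.I / 2) * ((Real.pi : ℝ) : ℂ)) = Complex.I := by
        rw [show (Complex.I / 2) * ((Real.pi : ℝ) : ℂ)
            = ((Real.pi / 2 : ℝ) : ℂ) * Complex.I by push_cast; ring]
        rw [Complex.exp_mul_I, ← Complex.ofReal_cos, ← Complex.ofReal_sin,
          Real.cos_pi_div_two, Real.sin_pi_div_two]
        simp
      rw [hval] at h2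
      exact h2.congr fun δ => (Phi_eq_arg ε (t, δ)).symm
    · -- lower limit
      have h1 : Filter.Tendsto (fun δ : ℝ => wfun ε (t, -δ)) (nhdsWithin 0 (Set.Ioi 0))
          (nhdsWithin w0 {z : ℂ | z.im < 0}) := by
        rw [tendsto_nhdsWithin_iff]
        constructor
        · have hneg : Filter.Tendsto (fun δ : ℝ => -δ) (nhds (0:ℝ)) (nhds (0:ℝ)) := by
            simpa using (continuous_neg.tendsto (0:ℝ))
          have htd : Filter.Tendsto (fun δ : ℝ => wfun ε (t, -δ)) (nhds (0:ℝ))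
              (nhds (wfun ε (t, (0:ℝ)))) := hCA.tendsto.comp hneg
          rw [hval0] at htd
          exact htd.mono_left nhdsWithin_le_nhds
        · filter_upwards [self_mem_nhdsWithin] with δ hδ
          show (wfun ε (t, -δ)).im < 0
          rw [wfun_im]
          apply div_neg_of_neg_of_pos
          · have : (0:ℝ) < δ := hδ
            have hsnd : ((t, -δ) : ℝ × ℝ).2 = -δ := rfl
            rw [hsnd]; nlinarith
          · exact Complex.normSq_pos.2 (hne (-δ))
      have harg := (Complex.tendsto_arg_nhdsWithin_im_neg_of_re_neg_of_im_zero
        hw0re hw0im).comp h1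
      have h2 := (hcont.tendsto (-Real.pi)).comp harg
      have hval : Complex.exp ((Complex.I / 2) * ((-Real.pi : ℝ) : ℂ)) = -Complex.I := by
        rw [show (Complex.I / 2) * ((-Real.pi : ℝ) : ℂ)
            = ((-(Real.pi / 2) : ℝ) : ℂ) * Complex.I by push_cast; ring]
        rw [Complex.exp_mul_I, ← Complex.ofReal_cos, ← Complex.ofReal_sin,
          Real.cos_neg, Real.sin_neg, Real.cos_pi_div_two, Real.sin_pi_div_two]
        simp
      rw [hval] at h2
      exact h2.congr fun δ => (Phi_eq_arg ε (t, -δ)).symm
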